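/- Let l₀, q₁, i be integers with l₀ ≥ 1, i ≥ 1 and i + l₀ − 1 ≤ q₁, let l₁, …, l_{q₁} be integers, and set ε = q₁ + l₀ + i + 1. Then l₀·(l₁+⋯+l_{i−1} + i − 1) + Σ_{j=1}^{l₀} (l₀−j)·(l_{i+j−1}−1) + q₁·l₀ + i·(l₀−1) + Σ_{j=1}^{q₁} (q₁−j)·(l_j−1) ≡ Σ_{j=i+l₀}^{q₁} (q₁−j)·(l_j−1) + ε·Σ_{j=i}^{i+l₀−1} (l_j−1) + Σ_{j=1}^{i−1} (q₁−j)·(l_j−1) + l₀·(l₁+⋯+l_{i−1} + q₁ − 1) − i (mod 2). -/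

import Mathlib

/-!
Split `∑_{j=1}^{q₁} (q₁-j)(l_j-1)` at `i` and `i+l₀`: the outer pieces cancel against the
right-hand side, and on the block `i ≤ j ≤ i+l₀-1` the coefficients of `l_j - 1` on the two
sides differ by `ε - (q₁ - j) - (l₀ - (j-i+1)) = 2j + 2`. The remaining terms differ by `2 i l₀`.
-/

open Finset

theorem sum_Icc_consecutive {M : Type*} [AddCommMonoid M] (f : ℕ → M) {a m b : ℕ}
    (ham : a ≤ m) (hm : 1 ≤ m) (hmb : m ≤ b + 1) :
    ∑ j ∈ Icc a (m - 1), f j + ∑ j ∈ Icc m b, f j = ∑ j ∈ Icc a b, f j := by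
  simp only [← Ico_add_one_right_eq_Icc, Nat.sub_add_cancel hm]
  exact sum_Ico_consecutive f ham hmb

theorem sum_Icc_eq_sum_Icc_one {M : Type*} [AddCommMonoid M] (g : ℕ → M) {i : ℕ} (hi : 1 ≤ i)
    (n : ℕ) : ∑ j ∈ Icc i (i + n - 1), g j = ∑ k ∈ Icc 1 n, g (i + k - 1) := by
  refine sum_nbij' (fun j => j - i + 1) (fun k => i + k - 1) ?_ ?_ ?_ ?_ ?_ <;>
    intro a ha <;> simp only [mem_Icc] at * <;>
    first | omega | (congr 1; omega)

theorem stmt4_general (l₀ q₁ i : ℕ) (hi : 1 ≤ i) (hiq : i + l₀ - 1 ≤ q₁)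
    (l : ℕ → ℤ) (ε : ℤ) (hε : ε = (q₁ : ℤ) + (l₀ : ℤ) + (i : ℤ) + 1) :
    Int.ModEq 2
      ((l₀ : ℤ) * ((∑ j ∈ Finset.Icc 1 (i - 1), l j) + (i : ℤ) - 1)
        + (∑ j ∈ Finset.Icc 1 l₀, ((l₀ : ℤ) - (j : ℤ)) * (l (i + j - 1) - 1))
        + (q₁ : ℤ) * (l₀ : ℤ) + (i : ℤ) * ((l₀ : ℤ) - 1)
        + (∑ j ∈ Finset.Icc 1 q₁, ((q₁ : ℤ) - (j : ℤ)) * (l j - 1)))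
      ((∑ j ∈ Finset.Icc (i + l₀) q₁, ((q₁ : ℤ) - (j : ℤ)) * (l j - 1))
        + ε * (∑ j ∈ Finset.Icc i (i + l₀ - 1), (l j - 1))
        + (∑ j ∈ Finset.Icc 1 (i - 1), ((q₁ : ℤ) - (j : ℤ)) * (l j - 1))
        + (l₀ : ℤ) * ((∑ j ∈ Finset.Icc 1 (i - 1), l j) + (q₁ : ℤ) - 1)
        - (i : ℤ)) := by
  set T : ℕ → ℤ := fun j => ((q₁ : ℤ) - (j : ℤ)) * (l j - 1)
  have hsplit : ∑ j ∈ Icc 1 q₁, T j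
      = ∑ j ∈ Icc 1 (i - 1), T j + ∑ k ∈ Icc 1 l₀, T (i + k - 1) + ∑ j ∈ Icc (i + l₀) q₁, T j := by
    rw [← sum_Icc_consecutive T hi hi (by omega),
      ← sum_Icc_consecutive T (by omega : i ≤ i + l₀) (by omega) (by omega),
      sum_Icc_eq_sum_Icc_one T hi l₀, add_assoc]
  have hblock : ε * ∑ k ∈ Icc 1 l₀, (l (i + k - 1) - 1) - ∑ k ∈ Icc 1 l₀, T (i + k - 1)
      - ∑ k ∈ Icc 1 l₀, ((l₀ : ℤ) - k) * (l (i + k - 1) - 1)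
      = 2 * ∑ k ∈ Icc 1 l₀, ((i : ℤ) + k) * (l (i + k - 1) - 1) := by
    rw [mul_sum, mul_sum, ← sum_sub_distrib, ← sum_sub_distrib]
    refine sum_congr rfl fun k hk => ?_
    have hcast : ((i + k - 1 : ℕ) : ℤ) = i + k - 1 := by
      have := (mem_Icc.mp hk).1
      omega
    simp only [T, hcast, hε]
    ring
  rw [hsplit, sum_Icc_eq_sum_Icc_one (fun j => l j - 1) hi l₀]
  refine (Int.modEq_iff_dvd.mpr
    ⟨l₀ * i - ∑ k ∈ Icc 1 l₀, ((i : ℤ) + k) * (l (i + k - 1) - 1), ?_⟩).symm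
  linear_combination -hblock

/-- Sign computation in the proof that Floer continuations are chain maps
(upper faces of the multiplihedron). -/
theorem stmt4 (l₀ q₁ i : ℕ) (hl₀ : 1 ≤ l₀) (hi : 1 ≤ i) (hiq : i + l₀ - 1 ≤ q₁)
    (l : ℕ → ℤ) (ε : ℤ) (hε : ε = (q₁ : ℤ) + (l₀ : ℤ) + (i : ℤ) + 1) :
    Int.ModEq 2
      ((l₀ : ℤ) * ((∑ j ∈ Finset.Icc 1 (i - 1), l j) + (i : ℤ) - 1)
        + (∑ j ∈ Finset.Icc 1 l₀, ((l₀ : ℤ) - (j : ℤ)) * (l (i + j - 1) - 1))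
        + (q₁ : ℤ) * (l₀ : ℤ) + (i : ℤ) * ((l₀ : ℤ) - 1)
        + (∑ j ∈ Finset.Icc 1 q₁, ((q₁ : ℤ) - (j : ℤ)) * (l j - 1)))
      ((∑ j ∈ Finset.Icc (i + l₀) q₁, ((q₁ : ℤ) - (j : ℤ)) * (l j - 1))
        + ε * (∑ j ∈ Finset.Icc i (i + l₀ - 1), (l j - 1))
        + (∑ j ∈ Finset.Icc 1 (i - 1), ((q₁ : ℤ) - (j : ℤ)) * (l j - 1))
        + (l₀ : ℤ) * ((∑ j ∈ Finset.Icc 1 (i - 1), l j) + (q₁ : ℤ) - 1)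
        - (i : ℤ)) :=
  stmt4_general l₀ q₁ i hi hiq l ε hε
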